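/- arXiv:2402.17636 — 3 statements merged into one kernel-verified Lean document; each statement's English description precedes it below -/
import Mathlib

section
/- Let G be a group, N a normal subgroup of G such that the quotient G/N is finite cyclic, and let τ ∈ G be an element whose image generates G/N; let d be the least positive integer with τ^d ∈ N. Let H be a group and r : N → H a group homomorphism. Then r extends to a group homomorphism R : G → H (i.e., R(σ) = r(σ) for all σ ∈ N) if and only if there exists g ∈ H such that r(τστ⁻¹) = g · r(σ) · g⁻¹ for all σ ∈ N, and r(τ^d) = g^d. Moreover, in that case the extension R can be chosen with R(τ) = g. -/
/-!
`G` is the image of `N ⋊ ℤ`, with `ℤ` acting on `N` by conjugation by `τ`, under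
`(σ, n) ↦ σ τⁿ`. The pair `(r, n ↦ gⁿ)` defines a homomorphism on `N ⋊ ℤ` because `r`
intertwines conjugation by `τ` with conjugation by `g`. It factors through `G`: if `σ τⁿ = 1`
then `τ⁻ⁿ = σ ∈ N`, so `d ∣ n`, and `r σ = r (τ^d)^(-n/d) = g⁻ⁿ`.
-/

open Function SemidirectProduct

theorem Function.Semiconj.mulAut_zpow {N H : Type*} [Mul N] [Mul H] {f : N → H}
    {α : MulAut N} {β : MulAut H} (h : Semiconj f α β) (n : ℤ) :
    Semiconj f ⇑(α ^ n) ⇑(β ^ n) := by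
  induction n using Int.induction_on with
  | zero => exact Semiconj.id_right
  | succ k ih => rw [zpow_add_one, zpow_add_one]; exact ih.comp_right h
  | pred k ih =>
    rw [zpow_sub_one, zpow_sub_one]
    exact ih.comp_right <|
      h.inverses_right (MulEquiv.apply_symm_apply α) (MulEquiv.symm_apply_apply β)

section

variable {G H : Type*} [Group G] [Group H] {N : Subgroup G} {τ : G} {d : ℕ}

theorem Subgroup.natCast_dvd_of_zpow_mem [N.Normal] (hd : 0 < d) (hτd : τ ^ d ∈ N)
    (hmin : ∀ k : ℕ, 0 < k → τ ^ k ∈ N → d ≤ k) {k : ℤ} (hk : τ ^ k ∈ N) : (d : ℤ) ∣ k := by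
  have horder : orderOf (τ : G ⧸ N) = d := by
    refine (orderOf_eq_iff hd).2 ⟨?_, fun m hm hm0 hτm => (hmin m hm0 ?_).not_gt hm⟩
    · rwa [← QuotientGroup.mk_pow, QuotientGroup.eq_one_iff]
    · rwa [← QuotientGroup.mk_pow, QuotientGroup.eq_one_iff] at hτm
  rwa [← horder, orderOf_dvd_iff_zpow_eq_one, ← QuotientGroup.mk_zpow, QuotientGroup.eq_one_iff]

theorem MonoidHom.apply_eq_zpow_of_coe_eq_zpow (r : N →* H) {g : H} (hτd : τ ^ d ∈ N)
    (hrd : r ⟨τ ^ d, hτd⟩ = g ^ d) {k : ℤ} (hk : (d : ℤ) ∣ k) {σ : N} (hσ : (σ : G) = τ ^ k) :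
    r σ = g ^ k := by
  obtain ⟨q, rfl⟩ := hk
  have : σ = ⟨τ ^ d, hτd⟩ ^ q := Subtype.ext (by simp [hσ, zpow_mul])
  rw [this, map_zpow, hrd, zpow_mul, zpow_natCast]

theorem exists_monoidHom_extension_of_semiconj [N.Normal]
    (hgen : ∀ x : G, ∃ n : ℤ, (τ ^ n)⁻¹ * x ∈ N)
    (hd : 0 < d) (hτd : τ ^ d ∈ N) (hmin : ∀ k : ℕ, 0 < k → τ ^ k ∈ N → d ≤ k)
    (r : N →* H) (g : H) (hconj : Semiconj r (MulAut.conjNormal τ) (MulAut.conj g))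
    (hpow : r ⟨τ ^ d, hτd⟩ = g ^ d) :
    ∃ R : G →* H, (∀ σ : N, R σ = r σ) ∧ R τ = g := by
  let φ : Multiplicative ℤ →* MulAut N := MulAut.conjNormal.comp (zpowersHom G τ)
  let Φ : N ⋊[φ] Multiplicative ℤ →* G :=
    lift N.subtype (zpowersHom G τ) fun n => by ext; simp [φ, -map_zpow]
  let Ψ : N ⋊[φ] Multiplicative ℤ →* H :=
    lift r (zpowersHom H g) fun n => by
      ext σ
      simpa [φ, map_zpow] using hconj.mulAut_zpow n.toAdd σ
  have hΦ : Surjective Φ := fun x =>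
    let ⟨n, hn⟩ := hgen x
    ⟨inr (.ofAdd n) * inl ⟨_, hn⟩, by simp [Φ]⟩
  have hker : Φ.ker ≤ Ψ.ker := by
    intro x hx
    have hleft : (x.left : G) = τ ^ (-x.right.toAdd) :=
      zpow_neg τ _ ▸ eq_inv_of_mul_eq_one_left hx
    have hdvd := Subgroup.natCast_dvd_of_zpow_mem hd hτd hmin (hleft ▸ x.left.2)
    change r x.left * g ^ x.right.toAdd = 1
    rw [r.apply_eq_zpow_of_coe_eq_zpow hτd hpow hdvd hleft, zpow_neg, inv_mul_cancel]
  refine ⟨Φ.liftOfSurjective hΦ ⟨Ψ, hker⟩, fun σ => ?_, ?_⟩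
  · simpa [Φ, Ψ] using Φ.liftOfRightInverse_comp_apply _ _ ⟨Ψ, hker⟩ (inl σ)
  · simpa [Φ, Ψ] using Φ.liftOfRightInverse_comp_apply _ _ ⟨Ψ, hker⟩ (inr (.ofAdd 1))

end

/-- let `N ⊴ G` with `G/N` finite cyclic generated by the image of `τ`,
and let `d` be the least positive integer with `τ^d ∈ N`.  A homomorphism
`r : N →* H` extends to `G` iff there is `g ∈ H` with
`r (τστ⁻¹) = g * r σ * g⁻¹` for all `σ ∈ N` and `r (τ^d) = g^d`;
moreover the extension can then be chosen with `R τ = g`. -/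
theorem extension_criterion_cyclic
    {G H : Type*} [Group G] [Group H]
    (N : Subgroup G) (hN : N.Normal) (τ : G)
    (hgen : ∀ g : G, ∃ n : ℤ, (τ ^ n)⁻¹ * g ∈ N)
    (d : ℕ) (hd : 0 < d) (hτd : τ ^ d ∈ N)
    (hmin : ∀ k : ℕ, 0 < k → τ ^ k ∈ N → d ≤ k)
    (r : N →* H) :
    ((∃ R : G →* H, ∀ σ : N, R σ = r σ) ↔
      (∃ g : H,
        (∀ σ : N, r ⟨τ * σ * τ⁻¹, hN.conj_mem σ.1 σ.2 τ⟩ = g * r σ * g⁻¹) ∧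
        r ⟨τ ^ d, hτd⟩ = g ^ d)) ∧
    (∀ g : H,
      (∀ σ : N, r ⟨τ * σ * τ⁻¹, hN.conj_mem σ.1 σ.2 τ⟩ = g * r σ * g⁻¹) →
      r ⟨τ ^ d, hτd⟩ = g ^ d →
      ∃ R : G →* H, (∀ σ : N, R σ = r σ) ∧ R τ = g) := by
  have hext g hconj hpow := exists_monoidHom_extension_of_semiconj hgen hd hτd hmin r g hconj hpow
  refine ⟨⟨fun ⟨R, hR⟩ => ⟨R τ, fun σ => ?_, ?_⟩, fun ⟨g, hconj, hpow⟩ => ?_⟩, hext⟩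
  · rw [← hR, ← hR]
    simp
  · rw [← hR]
    simp
  · exact (hext g hconj hpow).imp fun _ => And.left
end

section
/- Let G be a group, N a normal subgroup of G such that G/N is finite cyclic, τ ∈ G an element whose image generates G/N, and d the least positive integer with τ^d ∈ N. Let H be a group, A an abelian group, δ : H → A and ε : G → A group homomorphisms, and let r : N → H be a group homomorphism satisfying δ(r(σ)) = ε(σ) for all σ ∈ N. Then r extends to a group homomorphism R : G → H with δ(R(g)) = ε(g) for all g ∈ G if and only if there exists g ∈ H such that r(τστ⁻¹) = g · r(σ) · g⁻¹ for all σ ∈ N, r(τ^d) = g^d, and δ(g) = ε(τ). -/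
/-!
Let `ℤ` act on `N` by conjugation with powers of `τ`. Then `(σ, k) ↦ σ τ^k` maps `N ⋊ ℤ` onto `G`,
and since `τ^k ∈ N` exactly when `d ∣ k`, its kernel consists of the pairs `((τ^d)^(-q), dq)`.
Given `g`, the conjugation condition says precisely that `(σ, k) ↦ r σ * g^k` is a homomorphism
on `N ⋊ ℤ`, and `r (τ^d) = g^d` says that it kills this kernel, so it descends to `G`.
The determinant identity descends as well, because it holds on `N` and at `τ`.
-/

open SemidirectProduct

namespace MonoidHom

def conjIntertwiners {M H : Type*} [Group M] [Group H] (f : M →* H) : Subgroup (MulAut M × H) where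
  carrier := {p | ∀ m, f (p.1 m) = p.2 * f m * p.2⁻¹}
  one_mem' m := by simp
  mul_mem' {p q} hp hq m := by
    change f (p.1 (q.1 m)) = p.2 * q.2 * f m * (p.2 * q.2)⁻¹
    rw [hp, hq]
    group
  inv_mem' {p} hp m := by
    have hinv := hp (p.1⁻¹ m)
    rw [MulAut.apply_inv_self] at hinv
    simp only [Prod.fst_inv, Prod.snd_inv, inv_inv, hinv]
    group

end MonoidHom

namespace CyclicExtension

variable {G H : Type*} [Group G] [Group H] (N : Subgroup G) [N.Normal] (τ : G)

abbrev conjZPow : Multiplicative ℤ →* MulAut N := MulAut.conjNormal.comp (zpowersHom G τ)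

def cover : N ⋊[conjZPow N τ] Multiplicative ℤ →* G :=
  lift N.subtype (zpowersHom G τ) fun k ↦ by
    ext σ
    exact MulAut.conjNormal_apply _ σ

theorem cover_surjective (hgen : ∀ g : G, ∃ n : ℤ, (τ ^ n)⁻¹ * g ∈ N) :
    Function.Surjective (cover N τ) := by
  intro x
  obtain ⟨n, hn⟩ := hgen x
  refine ⟨⟨⟨x * (τ ^ n)⁻¹, ?_⟩, .ofAdd n⟩, ?_⟩
  · simpa [mul_assoc] using ‹N.Normal›.conj_mem _ hn (τ ^ n)
  · simp [cover]

theorem orderOf_mk_eq {d : ℕ} (hd : 0 < d) (hτd : τ ^ d ∈ N)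
    (hmin : ∀ k : ℕ, 0 < k → τ ^ k ∈ N → d ≤ k) : orderOf (τ : G ⧸ N) = d := by
  rw [orderOf_eq_iff hd]
  simp only [← QuotientGroup.mk_pow, ne_eq, QuotientGroup.eq_one_iff]
  exact ⟨hτd, fun k hk hk0 hτk ↦ (hmin k hk0 hτk).not_gt hk⟩

theorem zpow_mem_iff_dvd {d : ℕ} (hd : 0 < d) (hτd : τ ^ d ∈ N)
    (hmin : ∀ k : ℕ, 0 < k → τ ^ k ∈ N → d ≤ k) (k : ℤ) : τ ^ k ∈ N ↔ (d : ℤ) ∣ k := by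
  rw [← orderOf_mk_eq N τ hd hτd hmin, orderOf_dvd_iff_zpow_eq_one, ← QuotientGroup.mk_zpow,
    QuotientGroup.eq_one_iff]

variable {N τ}

theorem mem_conjIntertwiners_conjZPow {r : N →* H} {g : H}
    (hconj : ∀ σ : N, r (MulAut.conjNormal τ σ) = g * r σ * g⁻¹) (k : Multiplicative ℤ) :
    (conjZPow N τ k, zpowersHom H g k) ∈ r.conjIntertwiners := by
  have hone : (MulAut.conjNormal τ, g) ∈ r.conjIntertwiners := hconj
  simpa using r.conjIntertwiners.zpow_mem hone k.toAdd

def coverLift (r : N →* H) (g : H) (hconj : ∀ σ : N, r (MulAut.conjNormal τ σ) = g * r σ * g⁻¹) :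
    N ⋊[conjZPow N τ] Multiplicative ℤ →* H :=
  lift r (zpowersHom H g) fun k ↦ by ext σ; exact mem_conjIntertwiners_conjZPow hconj k σ

variable {r : N →* H} {g : H} {hconj : ∀ σ : N, r (MulAut.conjNormal τ σ) = g * r σ * g⁻¹}

theorem ker_cover_le_ker_coverLift {d : ℕ} (hd : 0 < d) (hτd : τ ^ d ∈ N)
    (hmin : ∀ k : ℕ, 0 < k → τ ^ k ∈ N → d ≤ k) (hpow : r ⟨τ ^ d, hτd⟩ = g ^ d) :
    (cover N τ).ker ≤ (coverLift r g hconj).ker := by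
  rintro ⟨σ, k⟩ hx
  have hσ : (σ : G) = (τ ^ k.toAdd)⁻¹ := eq_inv_of_mul_eq_one_left hx
  obtain ⟨q, hq⟩ := (zpow_mem_iff_dvd N τ hd hτd hmin k.toAdd).mp <| by
    simpa [hσ] using inv_mem σ.2
  have hσq : σ = (⟨τ ^ d, hτd⟩ : N) ^ (-q) := by
    ext
    rw [SubgroupClass.coe_zpow, hσ, hq, zpow_mul, zpow_natCast, zpow_neg]
  simp [coverLift, hσq, hpow, hq, zpow_mul]

theorem comp_coverLift {A : Type*} [CommGroup A] {δ : H →* A} {ε : G →* A}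
    (hdet : ∀ σ : N, δ (r σ) = ε σ) (hdg : δ g = ε τ) :
    δ.comp (coverLift r g hconj) = ε.comp (cover N τ) := by
  refine hom_ext (MonoidHom.ext fun σ ↦ ?_) (MonoidHom.ext_mint ?_)
  · simp [coverLift, cover, hdet]
  · simp [coverLift, cover, hdg]

end CyclicExtension

open CyclicExtension

/-- "strong compatibility": let `N ⊴ G` with `G/N` finite cyclic
generated by the image of `τ`, `d` the least positive integer with `τ^d ∈ N`,
`A` abelian, `δ : H →* A`, `ε : G →* A`, and `r : N →* H` with `δ ∘ r = ε` on `N`.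
Then `r` extends to `R : G →* H` with `δ ∘ R = ε` iff there exists `g ∈ H` with
`r (τστ⁻¹) = g * r σ * g⁻¹` on `N`, `r (τ^d) = g^d` and `δ g = ε τ`. -/
theorem extension_criterion_cyclic_with_determinant
    {G H A : Type*} [Group G] [Group H] [CommGroup A]
    (N : Subgroup G) (hN : N.Normal) (τ : G)
    (hgen : ∀ g : G, ∃ n : ℤ, (τ ^ n)⁻¹ * g ∈ N)
    (d : ℕ) (hd : 0 < d) (hτd : τ ^ d ∈ N)
    (hmin : ∀ k : ℕ, 0 < k → τ ^ k ∈ N → d ≤ k)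
    (δ : H →* A) (ε : G →* A)
    (r : N →* H) (hdet : ∀ σ : N, δ (r σ) = ε σ) :
    (∃ R : G →* H, (∀ σ : N, R σ = r σ) ∧ ∀ g : G, δ (R g) = ε g) ↔
      (∃ g : H,
        (∀ σ : N, r ⟨τ * σ * τ⁻¹, hN.conj_mem σ.1 σ.2 τ⟩ = g * r σ * g⁻¹) ∧
        r ⟨τ ^ d, hτd⟩ = g ^ d ∧
        δ g = ε τ) := by
  constructor
  · rintro ⟨R, hR, hRdet⟩
    refine ⟨R τ, fun σ ↦ ?_, ?_, hRdet τ⟩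
    · rw [← hR, ← hR σ, map_mul, map_mul, map_inv]
    · rw [← hR, map_pow]
  · rintro ⟨g, hconj, hpow, hdg⟩
    have hconj' (σ : N) : r (MulAut.conjNormal τ σ) = g * r σ * g⁻¹ :=
      (congrArg r (Subtype.ext (MulAut.conjNormal_apply τ σ))).trans (hconj σ)
    have hsurj := cover_surjective N τ hgen
    let R := (cover N τ).liftOfSurjective hsurj
      ⟨coverLift r g hconj', ker_cover_le_ker_coverLift hd hτd hmin hpow⟩
    have hR : R.comp (cover N τ) = coverLift r g hconj' := MonoidHom.liftOfRightInverse_comp ..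
    refine ⟨R, fun σ ↦ ?_, fun x ↦ ?_⟩
    · simpa [cover, coverLift] using DFunLike.congr_fun hR (inl σ)
    · have hδR : δ.comp R = ε := (MonoidHom.cancel_right hsurj).mp <| by
        rw [MonoidHom.comp_assoc, hR, comp_coverLift hdet hdg]
      exact DFunLike.congr_fun hδR x
end

section
/- Let G be a group acting on a (possibly nonabelian) group X by automorphisms, let Δ be a normal subgroup of G of index 2 contained in the kernel of the action (so every element of Δ acts trivially on X), let c ∈ G with c ∉ Δ, and let r : Δ → X be a group homomorphism. Then there exists a 1-cocycle x : G → X with x(σ) = r(σ) for all σ ∈ Δ if and only if there exists x₀ ∈ X such that x₀ · (c • x₀) = r(c²) and r(c σ c⁻¹) = x₀ · (c • r(σ)) · x₀⁻¹ for all σ ∈ Δ. Moreover, in that case the cocycle can be chosen with x(c) = x₀. -/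
/-- A 1-cocycle of a group `G` acting (by automorphisms) on a possibly
nonabelian group `X` is a map `f : G → X` with `f (g*h) = f g * (g • f h)`. -/
def IsOneCocycle {G X : Type*} [Group G] [Group X] [MulDistribMulAction G X]
    (f : G → X) : Prop :=
  ∀ g h : G, f (g * h) = f g * (g • f h)

/-- let `Δ ⊴ G` of index 2, contained in the kernel of the action of
`G` on `X`, let `c ∈ G` with `c ∉ Δ`, and let `r : Δ →* X`.  Then `r` extends to a
1-cocycle on `G` iff there is `x₀ ∈ X` with `x₀ * (c • x₀) = r (c²)` and
`r (cσc⁻¹) = x₀ * (c • r σ) * x₀⁻¹` for all `σ ∈ Δ`; moreover the cocycle can then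
be chosen with `x c = x₀`. -/
theorem cocycle_extension_index_two
    {G X : Type*} [Group G] [Group X] [MulDistribMulAction G X]
    (Δ : Subgroup G) (hΔ : Δ.Normal) (hidx : Δ.index = 2)
    (hker : ∀ δ ∈ Δ, ∀ x : X, δ • x = x)
    (c : G) (hc : c ∉ Δ) (r : Δ →* X) :
    ((∃ x : G → X, IsOneCocycle x ∧ ∀ σ : Δ, x σ = r σ) ↔
      (∃ x₀ : X,
        x₀ * (c • x₀) = r ⟨c ^ 2, Subgroup.sq_mem_of_index_two hidx c⟩ ∧
        ∀ σ : Δ, r ⟨c * σ * c⁻¹, hΔ.conj_mem σ.1 σ.2 c⟩ =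
          x₀ * (c • (r σ : X)) * x₀⁻¹)) ∧
    (∀ x₀ : X,
      x₀ * (c • x₀) = r ⟨c ^ 2, Subgroup.sq_mem_of_index_two hidx c⟩ →
      (∀ σ : Δ, r ⟨c * σ * c⁻¹, hΔ.conj_mem σ.1 σ.2 c⟩ =
        x₀ * (c • (r σ : X)) * x₀⁻¹) →
      ∃ x : G → X, IsOneCocycle x ∧ (∀ σ : Δ, x σ = r σ) ∧ x c = x₀) := by
  classical
  have hcinv : c⁻¹ ∉ Δ := fun h => hc ((Subgroup.inv_mem_iff Δ).1 h)
  have hmul : ∀ {g : G}, g ∉ Δ → g * c⁻¹ ∈ Δ := fun {g} hg =>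
    (Subgroup.mul_mem_iff_of_index_two hidx).2 (iff_of_false hg hcinv)
  have hre : ∀ {a b : G} (pa : a ∈ Δ) (pb : b ∈ Δ), a = b → r ⟨a, pa⟩ = r ⟨b, pb⟩ := by
    intro a b pa pb hab; subst hab; rfl
  have hr : ∀ {a b : G} (pa : a ∈ Δ) (pb : b ∈ Δ) (pab : a * b ∈ Δ),
      r ⟨a * b, pab⟩ = r ⟨a, pa⟩ * r ⟨b, pb⟩ := by
    intro a b pa pb pab
    exact map_mul r ⟨a, pa⟩ ⟨b, pb⟩
  have key : ∀ x₀ : X,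
      x₀ * (c • x₀) = r ⟨c ^ 2, Subgroup.sq_mem_of_index_two hidx c⟩ →
      (∀ σ : Δ, r ⟨c * σ * c⁻¹, hΔ.conj_mem σ.1 σ.2 c⟩ =
        x₀ * (c • (r σ : X)) * x₀⁻¹) →
      ∃ x : G → X, IsOneCocycle x ∧ (∀ σ : Δ, x σ = r σ) ∧ x c = x₀ := by
    intro x₀ h1 h2
    have hact : ∀ {g : G}, g ∉ Δ → ∀ y : X, g • y = c • y := by
      intro g hg y
      have hgc : g = (g * c⁻¹) * c := by group
      rw [hgc, mul_smul, hker _ (hmul hg)]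
    have h1' : x₀ * (c • x₀) = r ⟨c * c, Subgroup.mul_self_mem_of_index_two hidx c⟩ := by
      rw [h1]; exact hre _ _ (sq c)
    have h2' : ∀ (σ : G) (hσ : σ ∈ Δ),
        x₀ * (c • (r ⟨σ, hσ⟩ : X)) = r ⟨c * σ * c⁻¹, hΔ.conj_mem σ hσ c⟩ * x₀ := by
      intro σ hσ
      have h := h2 ⟨σ, hσ⟩
      rw [show (r ⟨c * σ * c⁻¹, hΔ.conj_mem σ hσ c⟩ : X)
          = x₀ * (c • (r ⟨σ, hσ⟩ : X)) * x₀⁻¹ from h]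
      group
    refine ⟨fun g => if hg : g ∈ Δ then r ⟨g, hg⟩ else r ⟨g * c⁻¹, hmul hg⟩ * x₀, ?_, ?_, ?_⟩
    · intro g h
      dsimp only
      by_cases hg : g ∈ Δ <;> by_cases hh : h ∈ Δ
      · have hm : g * h ∈ Δ := Δ.mul_mem hg hh
        rw [dif_pos hm, dif_pos hg, dif_pos hh, hker g hg, hr hg hh hm]
      · have hgh : g * h ∉ Δ := fun hm =>
          hh (((Subgroup.mul_mem_iff_of_index_two hidx).1 hm).1 hg)
        rw [dif_neg hgh, dif_pos hg, dif_neg hh, hker g hg,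
          hre (hmul hgh) (Δ.mul_mem hg (hmul hh)) (by group),
          hr hg (hmul hh) _, mul_assoc]
      · have hgh : g * h ∉ Δ := fun hm =>
          hg (((Subgroup.mul_mem_iff_of_index_two hidx).1 hm).2 hh)
        rw [dif_neg hgh, dif_pos hh, dif_neg hg, hact hg,
          hre (hmul hgh) (Δ.mul_mem (hmul hg) (hΔ.conj_mem h hh c)) (by group),
          hr (hmul hg) (hΔ.conj_mem h hh c) _, mul_assoc, ← h2' h hh, ← mul_assoc]
      · have hm : g * h ∈ Δ :=
          (Subgroup.mul_mem_iff_of_index_two hidx).2 (iff_of_false hg hh)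
        rw [dif_pos hm, dif_neg hg, dif_neg hh, hact hg, smul_mul',
          hre hm (Δ.mul_mem (Δ.mul_mem (hmul hg)
            (hΔ.conj_mem (h * c⁻¹) (hmul hh) c))
            (Subgroup.mul_self_mem_of_index_two hidx c)) (by group),
          hr (Δ.mul_mem (hmul hg) (hΔ.conj_mem (h * c⁻¹) (hmul hh) c)) (Subgroup.mul_self_mem_of_index_two hidx c) _,
          hr (hmul hg) (hΔ.conj_mem (h * c⁻¹) (hmul hh) c) _, ← h1']
        simp only [mul_assoc]
        rw [← mul_assoc x₀, h2' (h * c⁻¹) (hmul hh)]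
        simp [mul_assoc]
    · intro σ
      dsimp only
      rw [dif_pos σ.2]
    · dsimp only
      rw [dif_neg hc, hre (hmul hc) Δ.one_mem (by group),
        show r ⟨1, Δ.one_mem⟩ = 1 from map_one r, one_mul]
  refine ⟨⟨?_, ?_⟩, key⟩
  · rintro ⟨x, hx, hxr⟩
    refine ⟨x c, ?_, ?_⟩
    · have h := hx c c
      rw [← h]
      have h2 : (c : G) * c = c ^ 2 := (sq c).symm
      rw [h2]
      exact hxr ⟨c ^ 2, Subgroup.sq_mem_of_index_two hidx c⟩
    · intro σ
      have e1 : x (c * σ) = x c * (c • (r σ : X)) := by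
        rw [hx c σ, hxr σ]
      have e2 : x (c * (σ : G) * c⁻¹) * x c = x (c * σ) := by
        have h := hx (c * (σ : G) * c⁻¹) c
        rw [hker _ (hΔ.conj_mem σ.1 σ.2 c)] at h
        rw [show (c * (σ : G) * c⁻¹) * c = c * σ by group] at h
        exact h.symm
      have := hxr ⟨c * (σ : G) * c⁻¹, hΔ.conj_mem σ.1 σ.2 c⟩
      rw [← this]
      exact eq_mul_inv_of_mul_eq (e2.trans e1)
  · rintro ⟨x₀, h1, h2⟩
    obtain ⟨x, hx, hxr, _⟩ := key x₀ h1 h2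
    exact ⟨x, hx, hxr⟩
end
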